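/- (Lemma B.1.) Let T : S → A → S be a shared transition function and R_i : S → A → ℝ, i ∈ I, reward functions forming a family of deterministic MDPs with shared transitions, let H ≥ 1, and let the policy π* : S → A be α-optimal everywhere. Fix a state s ∈ S, a horizon index h < H, a positive integer n, indices i_1, …, i_n ∈ I, and real numbers Q_{j,a} for 1 ≤ j ≤ n and a ∈ A satisfying R_{i_j}(s,a) + V*_{i_j}(h, T(s,a)) ≥ Q_{j,a} ≥ R_{i_j}(s,a) + V*_{i_j}(h, T(s,a)) − β for all j and a. Then for every action a ∈ A: (1/n)·Σ_{j=1}^n Q_{j,π*(s)} ≥ (1/n)·Σ_{j=1}^n Q_{j,a} − α − β. -/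

import Mathlib

open scoped BigOperators

/-- The `h`-step value of a stationary deterministic policy `π` in the deterministic MDP
with transition function `T` and reward function `R`. -/
noncomputable def detVal {S A : Type*} (T : S → A → S) (R : S → A → ℝ)
    (π : S → A) : ℕ → S → ℝ
  | 0, _ => 0
  | h + 1, s => R s (π s) + detVal T R π h (T s (π s))

/-- The `h`-step optimal value in the deterministic MDP `(T, R)`. -/
noncomputable def detOptVal {S A : Type*} [Fintype A] [Nonempty A]
    (T : S → A → S) (R : S → A → ℝ) : ℕ → S → ℝ
  | 0, _ => 0
  | h + 1, s => ⨆ a : A, (R s a + detOptVal T R h (T s a))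

/-!
Since `V^π ≤ V*`, `α`-optimality of `π*` at horizon `h + 1` makes `π*(s)` an `α`-greedy action
for the optimal `h`-step Q-values `R_i(s, ·) + V*_i(h, T(s, ·))` of every MDP of the family.
Estimates that are `β`-accurate from below lose at most `β` more, and averaging over the
samples preserves the bound.
-/

section DetMDP

variable {S A : Type*} (T : S → A → S) (R : S → A → ℝ)

theorem detVal_succ (π : S → A) (h : ℕ) (s : S) :
    detVal T R π (h + 1) s = R s (π s) + detVal T R π h (T s (π s)) :=
  rfl

variable [Fintype A] [Nonempty A]

theorem add_detOptVal_le_detOptVal_succ (h : ℕ) (s : S) (a : A) :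
    R s a + detOptVal T R h (T s a) ≤ detOptVal T R (h + 1) s :=
  le_ciSup (f := fun a => R s a + detOptVal T R h (T s a)) (Set.finite_range _).bddAbove a

theorem detVal_le_detOptVal (π : S → A) (h : ℕ) (s : S) :
    detVal T R π h s ≤ detOptVal T R h s := by
  induction h generalizing s with
  | zero => simp [detVal, detOptVal]
  | succ h ih =>
    calc detVal T R π (h + 1) s = R s (π s) + detVal T R π h (T s (π s)) := rfl
      _ ≤ R s (π s) + detOptVal T R h (T s (π s)) := by gcongr; exact ih _
      _ ≤ detOptVal T R (h + 1) s := add_detOptVal_le_detOptVal_succ T R h s (π s)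

theorem add_detOptVal_le_of_detOptVal_sub_le_detVal {α : ℝ} (π : S → A) (h : ℕ) (s : S)
    (hπ : detOptVal T R (h + 1) s - α ≤ detVal T R π (h + 1) s) (a : A) :
    R s a + detOptVal T R h (T s a) - α ≤ R s (π s) + detOptVal T R h (T s (π s)) := by
  have hQa := add_detOptVal_le_detOptVal_succ T R h s a
  have hVπ := detVal_le_detOptVal T R π h (T s (π s))
  rw [detVal_succ] at hπ
  linarith

end DetMDP

theorem one_div_mul_sum_le_add {n : ℕ} (hn : 0 < n) {f g : Fin n → ℝ} {c : ℝ}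
    (hfg : ∀ j, g j ≤ f j + c) :
    (1 / (n : ℝ)) * ∑ j, g j ≤ (1 / (n : ℝ)) * ∑ j, f j + c := by
  have hsum : ∑ j, g j ≤ ∑ j, f j + n * c := by
    simpa [Finset.sum_add_distrib] using Finset.sum_le_sum (s := Finset.univ) fun j _ => hfg j
  have hn' : (0 : ℝ) < n := by exact_mod_cast hn
  calc (1 / (n : ℝ)) * ∑ j, g j ≤ (1 / (n : ℝ)) * (∑ j, f j + n * c) := by gcongr
    _ = (1 / (n : ℝ)) * ∑ j, f j + c := by field_simp

theorem lemma_B1_general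
    {S A I : Type*} [Fintype A] [Nonempty A]
    (T : S → A → S) (R : I → S → A → ℝ)
    (H : ℕ)
    (α β : ℝ)
    (πstar : S → A)
    (hopt : ∀ i : I, ∀ s : S, ∀ h : ℕ, h ≤ H →
      detVal T (R i) πstar h s ≥ detOptVal T (R i) h s - α)
    (s : S) (h : ℕ) (hh : h < H)
    (n : ℕ) (hn : 0 < n)
    (idx : Fin n → I) (Q : Fin n → A → ℝ)
    (hQub : ∀ j : Fin n, ∀ a : A,
      Q j a ≤ R (idx j) s a + detOptVal T (R (idx j)) h (T s a))
    (hQlb : ∀ j : Fin n, ∀ a : A,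
      R (idx j) s a + detOptVal T (R (idx j)) h (T s a) - β ≤ Q j a) :
    ∀ a : A,
      (1 / (n : ℝ)) * ∑ j : Fin n, Q j (πstar s) ≥
        (1 / (n : ℝ)) * ∑ j : Fin n, Q j a - α - β := by
  intro a
  have hgreedy : ∀ j, Q j a ≤ Q j (πstar s) + (α + β) := fun j => by
    have := add_detOptVal_le_of_detOptVal_sub_le_detVal T (R (idx j)) πstar h s
      (hopt (idx j) s (h + 1) hh) a
    linarith [hQub j a, hQlb j (πstar s)]
  linarith [one_div_mul_sum_le_add hn hgreedy]

/-- **Lemma B.1.** For a family of deterministic MDPs with shared transitions, a policy `π*`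
that is `α`-optimal everywhere, and `β`-accurate Q-estimates `Q j a` for the sampled MDPs
`i_1, …, i_n`, the empirical average of `Q` at `π*(s)` is within `α + β` of the empirical
average of `Q` at any other action. -/
theorem lemma_B1
    {S A I : Type*} [Fintype S] [Nonempty S] [Fintype A] [Nonempty A] [Fintype I]
    (T : S → A → S) (R : I → S → A → ℝ)
    (H : ℕ) (hH : 1 ≤ H)
    (α β : ℝ) (hα : 0 ≤ α) (hβ : 0 ≤ β)
    (πstar : S → A)
    (hopt : ∀ i : I, ∀ s : S, ∀ h : ℕ, h ≤ H →
      detVal T (R i) πstar h s ≥ detOptVal T (R i) h s - α)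
    (s : S) (h : ℕ) (hh : h < H)
    (n : ℕ) (hn : 0 < n)
    (idx : Fin n → I) (Q : Fin n → A → ℝ)
    (hQub : ∀ j : Fin n, ∀ a : A,
      Q j a ≤ R (idx j) s a + detOptVal T (R (idx j)) h (T s a))
    (hQlb : ∀ j : Fin n, ∀ a : A,
      R (idx j) s a + detOptVal T (R (idx j)) h (T s a) - β ≤ Q j a) :
    ∀ a : A,
      (1 / (n : ℝ)) * ∑ j : Fin n, Q j (πstar s) ≥
        (1 / (n : ℝ)) * ∑ j : Fin n, Q j a - α - β :=
  lemma_B1_general T R H α β πstar hopt s h hh n hn idx Q hQub hQlb
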